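/- arXiv:math/0106005 — 5 statements merged into one kernel-verified Lean document; each statement's English description precedes it below -/
import Mathlib

section
/- For any natural number q, (q! · (q+1)! / (2q+2)!) · C(2q+2, q+2) = 1/(q+2). Consequently, the sequence b_q = (q!/(2q+2)!) · ∑_{k=q+1}^{2q+1} k!/(k-q-1)! tends to 0 as q → ∞. -/
open Filter

lemma part1 (q : ℕ) :
    ((q.factorial : ℝ) * (q + 1).factorial / (2 * q + 2).factorial) *
      ((2 * q + 2).choose (q + 2)) = 1 / (q + 2) := by
  have h : (2 * q + 2).choose (q + 2) * (q + 2).factorial * (2 * q + 2 - (q + 2)).factorial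
      = (2 * q + 2).factorial := Nat.choose_mul_factorial_mul_factorial (by omega)
  have h2 : 2 * q + 2 - (q + 2) = q := by omega
  rw [h2] at h
  have hcast : ((2 * q + 2).factorial : ℝ)
      = ((2 * q + 2).choose (q + 2) : ℝ) * (q + 2).factorial * q.factorial := by
    exact_mod_cast h.symm
  have hc : ((2 * q + 2).choose (q + 2) : ℝ) ≠ 0 := by
    exact_mod_cast Nat.choose_pos (by omega : q + 2 ≤ 2 * q + 2) |>.ne'
  have hf2 : ((q + 2).factorial : ℝ) = (q + 2) * (q + 1).factorial := by
    rw [show q + 2 = (q + 1) + 1 by ring, Nat.factorial_succ]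
    push_cast; ring
  rw [hcast, hf2]
  have hq : (q.factorial : ℝ) ≠ 0 := by exact_mod_cast q.factorial_ne_zero
  have hq1 : ((q + 1).factorial : ℝ) ≠ 0 := by exact_mod_cast (q + 1).factorial_ne_zero
  have hq2 : ((q : ℝ) + 2) ≠ 0 := by positivity
  field_simp

lemma sumeq (q : ℕ) :
    ∑ k ∈ Finset.Icc (q + 1) (2 * q + 1), ((k.factorial : ℝ) / (k - q - 1).factorial)
      = ((q + 1).factorial : ℝ) * ((2 * q + 2).choose (q + 2)) := by
  have : ∀ k ∈ Finset.Icc (q + 1) (2 * q + 1),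
      ((k.factorial : ℝ) / (k - q - 1).factorial)
        = ((q + 1).factorial : ℝ) * (k.choose (q + 1)) := by
    intro k hk
    simp only [Finset.mem_Icc] at hk
    have h : k.choose (q + 1) * (q + 1).factorial * (k - (q + 1)).factorial
        = k.factorial := Nat.choose_mul_factorial_mul_factorial (by omega)
    have h2 : k - (q + 1) = k - q - 1 := by omega
    rw [h2] at h
    have hcast : (k.factorial : ℝ)
        = (k.choose (q + 1) : ℝ) * (q + 1).factorial * (k - q - 1).factorial := by
      exact_mod_cast h.symm
    have hne : ((k - q - 1).factorial : ℝ) ≠ 0 := by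
      exact_mod_cast (k - q - 1).factorial_ne_zero
    rw [hcast]
    field_simp
  rw [Finset.sum_congr rfl this, ← Finset.mul_sum, ← Nat.cast_sum]
  congr 1
  have := Nat.sum_Icc_choose (2 * q + 1) (q + 1)
  rw [show 2 * q + 1 + 1 = 2 * q + 2 by ring, show q + 1 + 1 = q + 2 by ring] at this
  exact_mod_cast this

/-- `(q!·(q+1)!/(2q+2)!)·C(2q+2,q+2) = 1/(q+2)`, and consequently
`b_q = (q!/(2q+2)!)·∑_{k=q+1}^{2q+1} k!/(k-q-1)! → 0` as `q → ∞`. -/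
theorem stmt_2 :
    (∀ q : ℕ,
      ((q.factorial : ℝ) * (q + 1).factorial / (2 * q + 2).factorial) *
        ((2 * q + 2).choose (q + 2)) = 1 / (q + 2)) ∧
    Tendsto
      (fun q : ℕ => ((q.factorial : ℝ) / (2 * q + 2).factorial) *
        ∑ k ∈ Finset.Icc (q + 1) (2 * q + 1),
          ((k.factorial : ℝ) / (k - q - 1).factorial))
      atTop (nhds 0) := by
  refine ⟨part1, ?_⟩
  have heq : (fun q : ℕ => ((q.factorial : ℝ) / (2 * q + 2).factorial) *
        ∑ k ∈ Finset.Icc (q + 1) (2 * q + 1),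
          ((k.factorial : ℝ) / (k - q - 1).factorial))
      = fun q : ℕ => 1 / ((q : ℝ) + 2) := by
    funext q
    rw [sumeq q, ← part1 q]
    ring
  rw [heq]
  have : Tendsto (fun q : ℕ => (q : ℝ) + 2) atTop atTop :=
    tendsto_atTop_add_const_right _ _ tendsto_natCast_atTop_atTop
  simpa [one_div, Pi.inv_def] using this.inv_tendsto_atTop
end

section
/- Fix n and set N = n + 2q. Let p(λ, μ) denote the number of chains μ = μ_0 ⊂ μ_1 ⊂ ... ⊂ μ_q = λ of partitions with μ_j a partition of n + 2j such that each μ_{j+1}\μ_j is a horizontal 2-strip (two added cells in distinct columns). Then for hook partitions λ = (k, 1^{N-k}) of N and μ = (l, 1^{n-l}) of n, p(λ, μ) = C(q, 2q - k + l). -/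
/-- The Young diagram of the hook partition `(k, 1^{N-k})` of `N` (for `1 ≤ k ≤ N`):
first row of length `k`, first column of length `N - k + 1`. -/
def hookYD (N k : ℕ) : YoungDiagram where
  cells :=
    ((Finset.range k).image fun j => (0, j)) ∪
      ((Finset.range (N - k + 1)).image fun i => (i, 0))
  isLowerSet := by
    rintro ⟨i, j⟩ ⟨i', j'⟩ ⟨hi, hj⟩ hmem
    simp only [Finset.coe_union, Finset.coe_image, Finset.coe_range, Set.mem_union,
      Set.mem_image, Set.mem_Iio, Prod.mk.injEq] at hmem ⊢
    rcases hmem with ⟨a, ha, h0, hja⟩ | ⟨a, ha, hia, h0⟩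
    · exact Or.inl ⟨j', by omega, by omega, rfl⟩
    · exact Or.inr ⟨i', by omega, rfl, by omega⟩

lemma mem_hookYD {N k i j : ℕ} :
    (i, j) ∈ hookYD N k ↔ (i = 0 ∧ j < k) ∨ (i < N - k + 1 ∧ j = 0) := by
  show (i, j) ∈ (hookYD N k).cells ↔ _
  simp only [hookYD, Finset.mem_union, Finset.mem_image, Finset.mem_range, Prod.mk.injEq]
  constructor
  · rintro (⟨a, ha, h0, rfl⟩ | ⟨a, ha, rfl, h0⟩)
    · exact Or.inl ⟨h0.symm, ha⟩
    · exact Or.inr ⟨ha, h0.symm⟩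
  · rintro (⟨rfl, hj⟩ | ⟨hi, rfl⟩)
    · exact Or.inl ⟨j, hj, rfl, rfl⟩
    · exact Or.inr ⟨i, hi, rfl, rfl⟩

lemma rowLen_hookYD {N k : ℕ} (hk : 1 ≤ k) : (hookYD N k).rowLen 0 = k := by
  have h1 : k - 1 < (hookYD N k).rowLen 0 := by
    rw [← YoungDiagram.mem_iff_lt_rowLen, mem_hookYD]; left; omega
  have h2 : ¬ (k < (hookYD N k).rowLen 0) := by
    rw [← YoungDiagram.mem_iff_lt_rowLen, mem_hookYD]; omega
  omega

lemma colLen_hookYD {N k : ℕ} (hk : 1 ≤ k) : (hookYD N k).colLen 0 = N - k + 1 := by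
  have h1 : N - k < (hookYD N k).colLen 0 := by
    rw [← YoungDiagram.mem_iff_lt_colLen, mem_hookYD]; right; omega
  have h2 : ¬ (N - k + 1 < (hookYD N k).colLen 0) := by
    rw [← YoungDiagram.mem_iff_lt_colLen, mem_hookYD]; omega
  omega

lemma card_hookYD {N k : ℕ} (hk : 1 ≤ k) (hkN : k ≤ N) : (hookYD N k).card = N := by
  show (hookYD N k).cells.card = N
  rw [show (hookYD N k).cells = ((Finset.range k).image fun j => (0, j)) ∪
      ((Finset.range (N - k + 1)).image fun i => (i, 0)) from rfl]
  rw [Finset.card_union]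
  have hA : (((Finset.range k).image fun j => ((0 : ℕ), j))).card = k := by
    rw [Finset.card_image_of_injective _ (fun a b h => by simpa using h)]; simp
  have hB : (((Finset.range (N - k + 1)).image fun i => (i, (0:ℕ)))).card = N - k + 1 := by
    rw [Finset.card_image_of_injective _ (fun a b h => by simpa using h)]; simp
  have hI : (((Finset.range k).image fun j => ((0:ℕ), j)) ∩
      ((Finset.range (N - k + 1)).image fun i => (i, (0:ℕ)))) = {(0, 0)} := by
    ext ⟨i, j⟩
    simp only [Finset.mem_inter, Finset.mem_image, Finset.mem_range, Prod.mk.injEq,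
      Finset.mem_singleton]
    constructor
    · rintro ⟨⟨a, ha, h0, h2⟩, ⟨b, hb, h3, h4⟩⟩
      omega
    · rintro ⟨rfl, rfl⟩
      exact ⟨⟨0, by omega, rfl, rfl⟩, ⟨0, by omega, rfl, rfl⟩⟩
  rw [hA, hB, hI]
  simp; omega

/-- `ν` is obtained from `μ` by adding a horizontal 2-strip: two cells in
distinct columns. -/
def IsHorizontalTwoStrip (μ ν : YoungDiagram) : Prop :=
  μ ≤ ν ∧ ν.card = μ.card + 2 ∧
    ∀ i₁ i₂ j : ℕ, (i₁, j) ∈ ν.cells \ μ.cells → (i₂, j) ∈ ν.cells \ μ.cells → i₁ = i₂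

lemma eq_hookYD_of_cross (ν : YoungDiagram)
    (hcross : ∀ i j : ℕ, (i, j) ∈ ν → i = 0 ∨ j = 0) (h0 : (0, 0) ∈ ν) :
    ν = hookYD (ν.rowLen 0 + ν.colLen 0 - 1) (ν.rowLen 0) := by
  have hr : 1 ≤ ν.rowLen 0 := by
    have := YoungDiagram.mem_iff_lt_rowLen.mp h0
    omega
  have hc : 1 ≤ ν.colLen 0 := YoungDiagram.mem_iff_lt_colLen.mp h0
  apply YoungDiagram.ext
  ext ⟨i, j⟩
  rw [YoungDiagram.mem_cells, YoungDiagram.mem_cells, mem_hookYD]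
  have hNk : ν.rowLen 0 + ν.colLen 0 - 1 - ν.rowLen 0 + 1 = ν.colLen 0 := by omega
  rw [hNk]
  constructor
  · intro hm
    rcases hcross i j hm with rfl | rfl
    · exact Or.inl ⟨rfl, YoungDiagram.mem_iff_lt_rowLen.mp hm⟩
    · exact Or.inr ⟨YoungDiagram.mem_iff_lt_colLen.mp hm, rfl⟩
  · rintro (⟨rfl, hj⟩ | ⟨hi, rfl⟩)
    · exact YoungDiagram.mem_iff_lt_rowLen.mpr hj
    · exact YoungDiagram.mem_iff_lt_colLen.mpr hi

lemma step_forward {m a : ℕ} (ha : 1 ≤ a) (ham : a ≤ m) {ν : YoungDiagram}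
    (hcross : ∀ i j : ℕ, (i, j) ∈ ν → i = 0 ∨ j = 0)
    (h : IsHorizontalTwoStrip (hookYD m a) ν) :
    ν = hookYD (m + 2) (a + 1) ∨ ν = hookYD (m + 2) (a + 2) := by
  obtain ⟨hle, hcard, hhor⟩ := h
  have h00 : (0, 0) ∈ ν := hle (mem_hookYD.mpr (Or.inl ⟨rfl, ha⟩))
  set r := ν.rowLen 0 with hrdef
  set c := ν.colLen 0 with hcdef
  have hν : ν = hookYD (r + c - 1) r := eq_hookYD_of_cross ν hcross h00
  have hr : 1 ≤ r := by
    have := YoungDiagram.mem_iff_lt_rowLen.mp h00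
    omega
  have hc : 1 ≤ c := YoungDiagram.mem_iff_lt_colLen.mp h00
  have hcards : r + c - 1 = m + 2 := by
    rw [hν, card_hookYD hr (by omega), card_hookYD ha ham] at hcard
    omega
  have hra : a ≤ r := by
    have : (0, a - 1) ∈ ν := hle (mem_hookYD.mpr (Or.inl ⟨rfl, by omega⟩))
    have := YoungDiagram.mem_iff_lt_rowLen.mp this
    omega
  have hca : m - a + 1 ≤ c := by
    have : (m - a, 0) ∈ ν := hle (mem_hookYD.mpr (Or.inr ⟨by omega, rfl⟩))
    have := YoungDiagram.mem_iff_lt_colLen.mp this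
    omega
  rcases Nat.lt_or_ge r (a + 1) with hcase | hcase
  · -- r = a : both cells added in column 0, contradiction
    exfalso
    have hr' : r = a := by omega
    have hmem : ∀ i : ℕ, m - a + 1 ≤ i → i < c → (i, 0) ∈ ν.cells \ (hookYD m a).cells := by
      intro i hi1 hi2
      rw [Finset.mem_sdiff, YoungDiagram.mem_cells, YoungDiagram.mem_cells, mem_hookYD]
      refine ⟨YoungDiagram.mem_iff_lt_colLen.mpr hi2, ?_⟩
      omega
    have := hhor (m - a + 1) (m - a + 2) 0 (hmem _ le_rfl (by omega)) (hmem _ (by omega) (by omega))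
    omega
  rcases Nat.lt_or_ge r (a + 2) with hcase2 | hcase2
  · left; rw [hν]
    congr 1 <;> omega
  · have hr2 : r = a + 2 := by omega
    right; rw [hν]
    congr 1 <;> omega

lemma step_back1 {m a : ℕ} (ha : 1 ≤ a) (ham : a ≤ m) :
    IsHorizontalTwoStrip (hookYD m a) (hookYD (m + 2) (a + 1)) := by
  refine ⟨?_, ?_, ?_⟩
  · intro ⟨i, j⟩ hm
    rw [mem_hookYD] at hm ⊢
    omega
  · rw [card_hookYD ha ham, card_hookYD (by omega) (by omega)]
  · intro i₁ i₂ j h1 h2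
    rw [Finset.mem_sdiff, YoungDiagram.mem_cells, YoungDiagram.mem_cells,
      mem_hookYD, mem_hookYD] at h1 h2
    push_neg at h1 h2
    omega

lemma step_back2 {m a : ℕ} (ha : 1 ≤ a) (ham : a ≤ m) :
    IsHorizontalTwoStrip (hookYD m a) (hookYD (m + 2) (a + 2)) := by
  refine ⟨?_, ?_, ?_⟩
  · intro ⟨i, j⟩ hm
    rw [mem_hookYD] at hm ⊢
    omega
  · rw [card_hookYD ha ham, card_hookYD (by omega) (by omega)]
  · intro i₁ i₂ j h1 h2
    rw [Finset.mem_sdiff, YoungDiagram.mem_cells, YoungDiagram.mem_cells,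
      mem_hookYD, mem_hookYD] at h1 h2
    push_neg at h1 h2
    omega
/-- Arm length after `t` steps, where `s` is the set of steps adding 1 to the arm
(other steps add 2). -/
def armSeq (q l : ℕ) (s : Finset (Fin q)) (t : ℕ) : ℕ :=
  l + ∑ j ∈ Finset.univ.filter (fun j : Fin q => j.val < t), (if j ∈ s then 1 else 2)

lemma armSeq_zero (q l : ℕ) (s : Finset (Fin q)) : armSeq q l s 0 = l := by
  simp [armSeq]

lemma filter_lt_succ (q t : ℕ) (ht : t < q) :
    Finset.univ.filter (fun j : Fin q => j.val < t + 1) =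
      insert ⟨t, ht⟩ (Finset.univ.filter (fun j : Fin q => j.val < t)) := by
  ext j
  simp only [Finset.mem_filter, Finset.mem_univ, true_and, Finset.mem_insert, Fin.ext_iff]
  omega

lemma armSeq_succ (q l : ℕ) (s : Finset (Fin q)) {t : ℕ} (ht : t < q) :
    armSeq q l s (t + 1) = armSeq q l s t + (if (⟨t, ht⟩ : Fin q) ∈ s then 1 else 2) := by
  unfold armSeq
  rw [filter_lt_succ q t ht, Finset.sum_insert (by simp)]
  omega

lemma armSeq_ge (q l : ℕ) (s : Finset (Fin q)) (t : ℕ) : l ≤ armSeq q l s t :=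
  Nat.le_add_right _ _

lemma card_filter_lt (q t : ℕ) :
    (Finset.univ.filter (fun j : Fin q => j.val < t)).card ≤ t := by
  have := Finset.card_le_card_of_injOn (fun j : Fin q => j.val)
    (s := Finset.univ.filter (fun j : Fin q => j.val < t)) (t := Finset.range t)
    (by intro j hj; simp at hj ⊢; omega)
    (by intro a _ b _ h; exact Fin.ext h)
  simpa using this

lemma armSeq_le (q l : ℕ) (s : Finset (Fin q)) (t : ℕ) : armSeq q l s t ≤ l + 2 * t := by
  unfold armSeq
  have h1 : ∑ j ∈ Finset.univ.filter (fun j : Fin q => j.val < t), (if j ∈ s then 1 else 2)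
      ≤ ∑ _j ∈ Finset.univ.filter (fun j : Fin q => j.val < t), 2 :=
    Finset.sum_le_sum (by intro j _; split <;> omega)
  rw [Finset.sum_const, smul_eq_mul] at h1
  have := card_filter_lt q t
  omega

lemma armSeq_last (q l : ℕ) (s : Finset (Fin q)) :
    armSeq q l s q = l + (s.card + 2 * (q - s.card)) := by
  unfold armSeq
  have huniv : Finset.univ.filter (fun j : Fin q => j.val < q) = Finset.univ := by
    ext j; simp [j.isLt]
  rw [huniv, Finset.sum_ite, Finset.sum_const, Finset.sum_const, smul_eq_mul, smul_eq_mul]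
  have h1 : Finset.univ.filter (fun j : Fin q => j ∈ s) = s := by
    ext j; simp
  have h2 : Finset.univ.filter (fun j : Fin q => j ∉ s) = sᶜ := by
    ext j; simp
  rw [h1, h2, Finset.card_compl, Fintype.card_fin]
  have : s.card ≤ q := by simpa using Finset.card_le_univ s
  omega

lemma card_le_q {q : ℕ} (s : Finset (Fin q)) : s.card ≤ q := by
  simpa using Finset.card_le_univ s

/-- The chain of hooks determined by a set `s` of "+1" steps. -/
def chainOf (n q l : ℕ) (s : Finset (Fin q)) : Fin (q + 1) → YoungDiagram :=
  fun t => hookYD (n + 2 * t.val) (armSeq q l s t.val)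

/-- The set of steps of a chain where the arm grows by exactly 1. -/
def stepSet (q : ℕ) (c : Fin (q + 1) → YoungDiagram) : Finset (Fin q) :=
  Finset.univ.filter fun j => (c j.succ).rowLen 0 = (c j.castSucc).rowLen 0 + 1

lemma chainOf_zero (n q l : ℕ) (s : Finset (Fin q)) : chainOf n q l s 0 = hookYD n l := by
  show hookYD (n + 2 * 0) (armSeq q l s 0) = hookYD n l
  rw [armSeq_zero]
  norm_num

lemma chainOf_step (n q l : ℕ) (hl : 1 ≤ l) (hln : l ≤ n) (s : Finset (Fin q)) (j : Fin q) :
    IsHorizontalTwoStrip (chainOf n q l s j.castSucc) (chainOf n q l s j.succ) := by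
  show IsHorizontalTwoStrip (hookYD (n + 2 * j.val) (armSeq q l s j.val))
    (hookYD (n + 2 * (j.val + 1)) (armSeq q l s (j.val + 1)))
  have ha : 1 ≤ armSeq q l s j.val := le_trans hl (armSeq_ge q l s j.val)
  have ham : armSeq q l s j.val ≤ n + 2 * j.val := by
    have := armSeq_le q l s j.val; omega
  have heq : n + 2 * (j.val + 1) = (n + 2 * j.val) + 2 := by omega
  rw [heq, armSeq_succ q l s j.isLt]
  split
  · exact step_back1 ha ham
  · exact step_back2 ha ham

lemma stepSet_chainOf (n q l : ℕ) (hl : 1 ≤ l) (s : Finset (Fin q)) :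
    stepSet q (chainOf n q l s) = s := by
  ext j
  simp only [stepSet, Finset.mem_filter, Finset.mem_univ, true_and]
  show (hookYD (n + 2 * (j.val + 1)) (armSeq q l s (j.val + 1))).rowLen 0 =
    (hookYD (n + 2 * j.val) (armSeq q l s j.val)).rowLen 0 + 1 ↔ j ∈ s
  have ha : 1 ≤ armSeq q l s j.val := le_trans hl (armSeq_ge q l s j.val)
  rw [armSeq_succ q l s j.isLt, rowLen_hookYD (by omega), rowLen_hookYD ha]
  constructor
  · intro h
    by_contra hj
    rw [if_neg (by simpa using hj)] at h
    omega
  · intro hj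
    rw [if_pos (by simpa using hj)]

lemma chain_le_last (q : ℕ) (c : Fin (q + 1) → YoungDiagram)
    (hstep : ∀ j : Fin q, IsHorizontalTwoStrip (c j.castSucc) (c j.succ)) :
    ∀ t : Fin (q + 1), c t ≤ c (Fin.last q) := by
  suffices H : ∀ m : ℕ, ∀ t : Fin (q + 1), q - t.val = m → c t ≤ c (Fin.last q) by
    intro t; exact H (q - t.val) t rfl
  intro m
  induction m with
  | zero =>
    intro t ht
    have : t = Fin.last q := Fin.ext (by simp only [Fin.val_last]; omega)
    rw [this]
  | succ m ih =>
    intro t ht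
    have htq : t.val < q := by omega
    set j : Fin q := ⟨t.val, htq⟩ with hj
    have h1 : c j.castSucc ≤ c j.succ := (hstep j).1
    have h2 : j.castSucc = t := Fin.ext rfl
    rw [h2] at h1
    exact le_trans h1 (ih j.succ (by have e : (j.succ : ℕ) = t.val + 1 := rfl; omega))

lemma chain_structure (n q l k : ℕ) (hl : 1 ≤ l) (hln : l ≤ n) (hk : 1 ≤ k)
    (c : Fin (q + 1) → YoungDiagram)
    (h0 : c 0 = hookYD n l) (hlast : c (Fin.last q) = hookYD (n + 2 * q) k)
    (hstep : ∀ j : Fin q, IsHorizontalTwoStrip (c j.castSucc) (c j.succ)) :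
    ∀ t : ℕ, (ht : t ≤ q) →
      c ⟨t, by omega⟩ = hookYD (n + 2 * t) (armSeq q l (stepSet q c) t) := by
  have hcross : ∀ t : Fin (q + 1), ∀ i j : ℕ, (i, j) ∈ c t → i = 0 ∨ j = 0 := by
    intro t i j hm
    have := chain_le_last q c hstep t hm
    rw [hlast] at this
    rcases mem_hookYD.mp this with ⟨h, _⟩ | ⟨_, h⟩
    · exact Or.inl h
    · exact Or.inr h
  intro t
  induction t with
  | zero =>
    intro _
    have : (⟨0, by omega⟩ : Fin (q + 1)) = 0 := rfl
    rw [this, h0, armSeq_zero]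
    norm_num
  | succ t ih =>
    intro ht
    have htq : t < q := by omega
    have iht := ih (by omega)
    set a := armSeq q l (stepSet q c) t with hadef
    have ha1 : 1 ≤ a := le_trans hl (armSeq_ge _ _ _ _)
    have ha2 : a ≤ n + 2 * t := by have := armSeq_le q l (stepSet q c) t; omega
    set j : Fin q := ⟨t, htq⟩ with hj
    have hcs : j.castSucc = (⟨t, by omega⟩ : Fin (q + 1)) := Fin.ext rfl
    have hsc : j.succ = (⟨t + 1, by omega⟩ : Fin (q + 1)) := Fin.ext rfl
    have hstep' : IsHorizontalTwoStrip (hookYD (n + 2 * t) a) (c j.succ) := by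
      have := hstep j
      rwa [hcs, iht] at this
    have hfw := step_forward ha1 ha2 (fun i j' hm => hcross j.succ i j' hm) hstep'
    have harm := armSeq_succ q l (stepSet q c) htq
    rcases hfw with hcase | hcase
    · have hmem : j ∈ stepSet q c := by
        simp only [stepSet, Finset.mem_filter, Finset.mem_univ, true_and]
        rw [hcase, hcs, iht, rowLen_hookYD (by omega), rowLen_hookYD ha1]
      rw [if_pos hmem] at harm
      rw [← hsc, hcase, harm, show n + 2 * (t + 1) = n + 2 * t + 2 by omega]
    · have hmem : j ∉ stepSet q c := by
        simp only [stepSet, Finset.mem_filter, Finset.mem_univ, true_and]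
        rw [hcase, hcs, iht, rowLen_hookYD (by omega), rowLen_hookYD ha1]
        omega
      rw [if_neg hmem] at harm
      rw [← hsc, hcase, harm, show n + 2 * (t + 1) = n + 2 * t + 2 by omega]

lemma natcard_subsets (q r : ℕ) :
    Nat.card {s : Finset (Fin q) // s.card = r} = q.choose r := by
  rw [Nat.card_eq_fintype_card, Fintype.card_subtype]
  have h : Finset.univ.filter (fun s : Finset (Fin q) => s.card = r) =
      Finset.powersetCard r Finset.univ := by
    ext s; simp [Finset.mem_powersetCard_univ]
  rw [h, Finset.card_powersetCard, Finset.card_univ, Fintype.card_fin]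

lemma chainOf_last (n q l k : ℕ) (hk2 : k ≤ 2 * q + l) (s : Finset (Fin q))
    (hs : s.card = 2 * q + l - k) :
    chainOf n q l s (Fin.last q) = hookYD (n + 2 * q) k := by
  show hookYD (n + 2 * (Fin.last q).val) (armSeq q l s (Fin.last q).val) = _
  have h1 : (Fin.last q).val = q := rfl
  rw [h1, armSeq_last]
  have := card_le_q s
  congr 1
  omega

/-- `p(λ, μ)`: the number of chains `μ = μ₀ ⊂ μ₁ ⊂ ⋯ ⊂ μ_q = λ` of Young diagrams in
which each `μ_{j+1} \ μ_j` is a horizontal 2-strip. -/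
noncomputable def chainCount (q : ℕ) (μ lam : YoungDiagram) : ℕ :=
  Nat.card {c : Fin (q + 1) → YoungDiagram //
    c 0 = μ ∧ c (Fin.last q) = lam ∧
      ∀ j : Fin q, IsHorizontalTwoStrip (c j.castSucc) (c j.succ)}

/-- For hooks `μ = (l, 1^{n-l})` of `n` and `λ = (k, 1^{N-k})` of `N = n + 2q`, the
number of chains from `μ` to `λ` adding a horizontal 2-strip at each of `q` steps is
the binomial coefficient `C(q, 2q - k + l)`. -/
theorem stmt_5 (n q k l : ℕ) (hl : 1 ≤ l) (hln : l ≤ n) (hk : 1 ≤ k)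
    (hkN : k ≤ n + 2 * q) (hk2 : k ≤ 2 * q + l) :
    chainCount q (hookYD n l) (hookYD (n + 2 * q) k) = q.choose (2 * q + l - k) := by
  unfold chainCount
  rw [← natcard_subsets q (2 * q + l - k)]
  refine (Nat.card_eq_of_bijective
    (fun sp : {s : Finset (Fin q) // s.card = 2 * q + l - k} =>
      (⟨chainOf n q l sp.1, chainOf_zero n q l sp.1,
        chainOf_last n q l k hk2 sp.1 sp.2,
        fun j => chainOf_step n q l hl hln sp.1 j⟩ :
      {c : Fin (q + 1) → YoungDiagram //
        c 0 = hookYD n l ∧ c (Fin.last q) = hookYD (n + 2 * q) k ∧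
          ∀ j : Fin q, IsHorizontalTwoStrip (c j.castSucc) (c j.succ)}))
    ⟨?_, ?_⟩).symm
  · -- injective
    intro s1 s2 h
    apply Subtype.ext
    have h2 := congrArg (fun cp : {c : Fin (q + 1) → YoungDiagram //
        c 0 = hookYD n l ∧ c (Fin.last q) = hookYD (n + 2 * q) k ∧
          ∀ j : Fin q, IsHorizontalTwoStrip (c j.castSucc) (c j.succ)} =>
      stepSet q cp.1) h
    simpa only [stepSet_chainOf n q l hl] using h2
  · -- surjective
    rintro ⟨c, hc0, hclast, hcstep⟩
    have hstruct := chain_structure n q l k hl hln hk c hc0 hclast hcstep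
    set s := stepSet q c with hsdef
    have hq := hstruct q le_rfl
    have hlq : (⟨q, by omega⟩ : Fin (q + 1)) = Fin.last q := rfl
    rw [hlq, hclast] at hq
    have hks : k = armSeq q l s q := by
      have h1 := rowLen_hookYD (N := n + 2 * q) hk
      have h2 := rowLen_hookYD (N := n + 2 * q) (k := armSeq q l s q)
        (le_trans hl (armSeq_ge q l s q))
      rw [hq] at h1
      rw [h1] at h2
      exact h2
    have hcard : s.card = 2 * q + l - k := by
      have h3 := armSeq_last q l s
      have h4 := card_le_q s
      omega
    refine ⟨⟨s, hcard⟩, ?_⟩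
    apply Subtype.ext
    funext t
    show chainOf n q l s t = c t
    have h5 := hstruct t.val (by omega)
    rw [show (⟨t.val, by omega⟩ : Fin (q + 1)) = t from Fin.ext rfl] at h5
    exact h5.symm
end

section
/- Fix integers 1 ≤ l < n, and for each q set N = n + 2q and a_q(l) = (1/(l!(n-l-1)!)) · (q!/N!) · ∑_{k=q+l}^{2q+l} k!(N-k-1)! / ((2q-k+l)!(k-l-q)!). Then a_q(l) → 0 as q → ∞. -/
open Filter

private lemma vander6 (b : ℕ) : ∀ a q : ℕ,
    ∑ j ∈ Finset.range (q + 1), (a + j).choose j * (b + (q - j)).choose (q - j)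
      = (a + b + q + 1).choose q := by
  intro a
  induction a with
  | zero =>
    intro q
    induction q with
    | zero => simp
    | succ q ih =>
      rw [Finset.sum_range_succ']
      have h1 : ∑ i ∈ Finset.range (q + 1),
          (0 + (i + 1)).choose (i + 1) * (b + (q + 1 - (i + 1))).choose (q + 1 - (i + 1))
          = ∑ i ∈ Finset.range (q + 1), (0 + i).choose i * (b + (q - i)).choose (q - i) := by
        refine Finset.sum_congr rfl fun i _ => ?_
        simp [Nat.succ_sub_succ]
      rw [h1, ih]
      simp only [Nat.zero_add, Nat.sub_zero, Nat.choose_self, one_mul]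
      rw [show b + (q + 1) + 1 = (b + q + 1) + 1 from by omega,
          show b + (q + 1) = b + q + 1 from by omega,
          Nat.choose_succ_succ' (b + q + 1) q]
  | succ a ih =>
    intro q
    induction q with
    | zero => simp
    | succ q ihq =>
      rw [Finset.sum_range_succ']
      have split : ∀ i : ℕ, (a + 1 + (i + 1)).choose (i + 1)
          = (a + 1 + i).choose i + (a + (i + 1)).choose (i + 1) := by
        intro i
        have h := Nat.choose_succ_succ (a + 1 + i) i
        have e1 : a + 1 + (i + 1) = (a + 1 + i) + 1 := by omega
        have e2 : (a + 1 + i).choose (i + 1) = (a + (i + 1)).choose (i + 1) := by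
          rw [show a + 1 + i = a + (i + 1) from by omega]
        rw [e1, h, e2]
      have h1 : ∑ i ∈ Finset.range (q + 1),
          (a + 1 + (i + 1)).choose (i + 1) * (b + (q + 1 - (i + 1))).choose (q + 1 - (i + 1))
          = (∑ i ∈ Finset.range (q + 1),
              (a + 1 + i).choose i * (b + (q - i)).choose (q - i))
            + ∑ i ∈ Finset.range (q + 1),
              (a + (i + 1)).choose (i + 1) * (b + (q + 1 - (i + 1))).choose (q + 1 - (i + 1)) := by
        rw [← Finset.sum_add_distrib]
        refine Finset.sum_congr rfl fun i _ => ?_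
        rw [split i, Nat.add_mul, Nat.succ_sub_succ]
      rw [h1, ihq]
      have h2 : (∑ i ∈ Finset.range (q + 1),
            (a + (i + 1)).choose (i + 1) * (b + (q + 1 - (i + 1))).choose (q + 1 - (i + 1)))
          + (a + 1 + 0).choose 0 * (b + (q + 1 - 0)).choose (q + 1 - 0)
          = (a + b + (q + 1) + 1).choose (q + 1) := by
        rw [← ih (q + 1), eq_comm, Finset.sum_range_succ']
        simp only [Nat.add_zero, Nat.choose_zero_right]
      rw [add_assoc, h2,
          show a + b + (q + 1) + 1 = a + 1 + b + q + 1 from by omega,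
          show a + 1 + b + (q + 1) + 1 = (a + 1 + b + q + 1) + 1 from by omega,
          Nat.choose_succ_succ' (a + 1 + b + q + 1) q]

private lemma term_eq6 (l b q j : ℕ) (hj : j ≤ q) :
    (((q + l + j).factorial : ℝ) * ((l + 1 + b) + 2 * q - (q + l + j) - 1).factorial) /
        (((2 * q + l - (q + l + j)).factorial : ℝ) * ((q + l + j) - l - q).factorial)
      = (((q + l).factorial * b.factorial *
          ((q + l + j).choose j * (b + (q - j)).choose (q - j)) : ℕ) : ℝ) := by
  rw [show (l + 1 + b) + 2 * q - (q + l + j) - 1 = b + (q - j) from by omega,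
      show 2 * q + l - (q + l + j) = q - j from by omega,
      show (q + l + j) - l - q = j from by omega]
  have h1 := Nat.choose_mul_factorial_mul_factorial (show j ≤ q + l + j by omega)
  rw [show q + l + j - j = q + l from by omega] at h1
  have h2 := Nat.choose_mul_factorial_mul_factorial (Nat.le_add_left (q - j) b)
  rw [Nat.add_sub_cancel] at h2
  rw [← h1, ← h2]
  have hjne : ((j.factorial : ℝ)) ≠ 0 := Nat.cast_ne_zero.mpr (Nat.factorial_ne_zero j)
  have hqjne : (((q - j).factorial : ℝ)) ≠ 0 := Nat.cast_ne_zero.mpr (Nat.factorial_ne_zero _)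
  push_cast
  field_simp

/-- For fixed `1 ≤ l < n`, with `N = n + 2q`,
`a_q(l) = (1/(l!(n-l-1)!))·(q!/N!)·∑_{k=q+l}^{2q+l} k!(N-k-1)!/((2q-k+l)!(k-l-q)!)`
tends to `0` as `q → ∞`. -/
theorem stmt_6 (n l : ℕ) (hl : 1 ≤ l) (hln : l < n) :
    Tendsto
      (fun q : ℕ =>
        (1 / ((l.factorial : ℝ) * (n - l - 1).factorial)) *
          ((q.factorial : ℝ) / (n + 2 * q).factorial) *
          ∑ k ∈ Finset.Icc (q + l) (2 * q + l),
            ((k.factorial : ℝ) * (n + 2 * q - k - 1).factorial) /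
              ((2 * q + l - k).factorial * (k - l - q).factorial))
      atTop (nhds 0) := by
  obtain ⟨b, rfl⟩ : ∃ b, n = l + 1 + b := ⟨n - l - 1, by omega⟩
  have key : ∀ q : ℕ,
      (1 / ((l.factorial : ℝ) * ((l + 1 + b) - l - 1).factorial)) *
          ((q.factorial : ℝ) / ((l + 1 + b) + 2 * q).factorial) *
          ∑ k ∈ Finset.Icc (q + l) (2 * q + l),
            ((k.factorial : ℝ) * ((l + 1 + b) + 2 * q - k - 1).factorial) /
              ((2 * q + l - k).factorial * (k - l - q).factorial)
        = ((q + l).factorial : ℝ) / (l.factorial * (l + 1 + b + q).factorial) := by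
    intro q
    have hsum : ∑ k ∈ Finset.Icc (q + l) (2 * q + l),
        ((k.factorial : ℝ) * ((l + 1 + b) + 2 * q - k - 1).factorial) /
          ((2 * q + l - k).factorial * (k - l - q).factorial)
        = (((q + l).factorial * b.factorial * ((l + 1 + b) + 2 * q).choose q : ℕ) : ℝ) := by
      rw [← Finset.Ico_add_one_right_eq_Icc, Finset.sum_Ico_eq_sum_range,
          show 2 * q + l + 1 - (q + l) = q + 1 from by omega]
      have hterms : ∑ i ∈ Finset.range (q + 1),
          (((q + l + i).factorial : ℝ) * ((l + 1 + b) + 2 * q - (q + l + i) - 1).factorial) /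
            (((2 * q + l - (q + l + i)).factorial : ℝ) * ((q + l + i) - l - q).factorial)
          = ∑ i ∈ Finset.range (q + 1),
            (((q + l).factorial * b.factorial *
              ((q + l + i).choose i * (b + (q - i)).choose (q - i)) : ℕ) : ℝ) := by
        refine Finset.sum_congr rfl fun i hi => ?_
        exact term_eq6 l b q i (by simpa [Nat.lt_succ_iff] using Finset.mem_range.mp hi)
      rw [hterms, ← Nat.cast_sum, ← Finset.mul_sum, vander6 b (q + l) q,
          show q + l + b + q + 1 = (l + 1 + b) + 2 * q from by omega]
    rw [hsum]
    have hfac : (((l + 1 + b) + 2 * q).choose q) * q.factorial * (l + 1 + b + q).factorial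
        = ((l + 1 + b) + 2 * q).factorial := by
      have h := Nat.choose_mul_factorial_mul_factorial
        (show q ≤ (l + 1 + b) + 2 * q by omega)
      rwa [show (l + 1 + b) + 2 * q - q = l + 1 + b + q from by omega] at h
    have hN : (((l + 1 + b) + 2 * q).factorial : ℝ)
        = ((((l + 1 + b) + 2 * q).choose q : ℕ) : ℝ) * q.factorial * (l + 1 + b + q).factorial := by
      exact_mod_cast hfac.symm
    rw [show (l + 1 + b) - l - 1 = b from by omega, hN]
    have c1 : ((l.factorial : ℝ)) ≠ 0 := Nat.cast_ne_zero.mpr (Nat.factorial_ne_zero l)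
    have c2 : ((b.factorial : ℝ)) ≠ 0 := Nat.cast_ne_zero.mpr (Nat.factorial_ne_zero b)
    have c3 : ((q.factorial : ℝ)) ≠ 0 := Nat.cast_ne_zero.mpr (Nat.factorial_ne_zero q)
    have c4 : (((l + 1 + b + q).factorial : ℝ)) ≠ 0 :=
      Nat.cast_ne_zero.mpr (Nat.factorial_ne_zero _)
    have c5 : (((((l + 1 + b) + 2 * q).choose q : ℕ)) : ℝ) ≠ 0 :=
      Nat.cast_ne_zero.mpr (Nat.choose_pos (show q ≤ (l + 1 + b) + 2 * q by omega)).ne'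
    push_cast
    field_simp
  rw [tendsto_congr key]
  have hb : ∀ q : ℕ, ((q + l).factorial : ℝ) / (l.factorial * (l + 1 + b + q).factorial)
      ≤ 1 / ((q : ℝ) + 1) := by
    intro q
    rw [div_le_div_iff₀ (by positivity) (by positivity)]
    have h1 : (q + 1) * (q + l).factorial ≤ (l + 1 + b + q).factorial := by
      calc (q + 1) * (q + l).factorial ≤ (q + l + 1) * (q + l).factorial := by
            exact Nat.mul_le_mul_right _ (by omega)
        _ = (q + l + 1).factorial := (Nat.factorial_succ _).symm
        _ ≤ (l + 1 + b + q).factorial := Nat.factorial_le (by omega)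
    have h2 : (l + 1 + b + q).factorial ≤ l.factorial * (l + 1 + b + q).factorial :=
      Nat.le_mul_of_pos_left _ (Nat.factorial_pos l)
    have := le_trans h1 h2
    have hr : ((q : ℝ) + 1) * (q + l).factorial
        ≤ (l.factorial : ℝ) * (l + 1 + b + q).factorial := by exact_mod_cast this
    linarith
  refine squeeze_zero (fun q => by positivity) hb ?_
  exact tendsto_one_div_add_atTop_nhds_zero_nat
end

section
/- For fixed integers 1 ≤ l < n and N = n + 2q, the quantity ((q+n-l-1)^{n-l-1} · q! · (q+l)! / N!) · C(2q+l+1, q+l+1) is bounded above by a constant (depending only on n and l) times (1/(q+l+1)) · ((q+n-l-1)/(2q+l+2))^{n-l-1}, and hence tends to 0 as q → ∞. -/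
/-!
Writing `C(2q+l+1, q+l+1) · q! · (q+l)! · (q+l+1) = (2q+l+1)!` and bounding each of the
`n-l-1` remaining factors of `(n+2q)! / (2q+l+1)!` from below by `2q+l+2` gives the estimate
with constant `1`. Once `q ≥ n` the ratio `(q+n-l-1)/(2q+l+2)` is at most `1`, so the quantity
is squeezed between `0` and `1/(q+l+1)`.
-/

open Filter Nat

theorem Nat.choose_mul_factorial_mul_factorial_mul_pow_le (a b m : ℕ) :
    (a + b + 1).choose (b + 1) * a ! * b ! * (b + 1) * (a + b + 2) ^ m ≤ (a + b + 1 + m)! := by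
  calc (a + b + 1).choose (b + 1) * a ! * b ! * (b + 1) * (a + b + 2) ^ m
      = (a + (b + 1)).choose (b + 1) * a ! * (b + 1)! * (a + b + 2) ^ m := by
        rw [factorial_succ]; ring_nf
    _ = (a + b + 1)! * (a + b + 1 + 1) ^ m := by
        rw [add_choose_mul_factorial_mul_factorial, ← add_assoc]
    _ ≤ (a + b + 1 + m)! := factorial_mul_pow_le_factorial

theorem pow_mul_factorial_div_mul_choose_le (a b m : ℕ) {x : ℝ} (hx : 0 ≤ x) :
    x ^ m * a ! * b ! / (a + b + 1 + m)! * (a + b + 1).choose (b + 1) ≤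
      1 / (b + 1) * (x / (a + b + 2)) ^ m := by
  have hle : ((a + b + 1).choose (b + 1) * a ! * b ! * (b + 1) * (a + b + 2) ^ m : ℝ) ≤
      (a + b + 1 + m)! := by
    exact_mod_cast Nat.choose_mul_factorial_mul_factorial_mul_pow_le a b m
  rw [div_pow, div_mul_eq_mul_div, one_div_mul_eq_div, div_div,
    div_le_div_iff₀ (by positivity) (by positivity)]
  calc x ^ m * a ! * b ! * (a + b + 1).choose (b + 1) * ((a + b + 2 : ℝ) ^ m * (b + 1))
      = x ^ m * ((a + b + 1).choose (b + 1) * a ! * b ! * (b + 1) * (a + b + 2) ^ m) := by ring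
    _ ≤ x ^ m * (a + b + 1 + m)! := by gcongr

theorem stmt_13_general (n l : ℕ) (hln : l < n) :
    (∃ C : ℝ, 0 < C ∧ ∀ q : ℕ,
      (((q + n - l - 1 : ℕ) ^ (n - l - 1) : ℝ) * q.factorial * (q + l).factorial /
          (n + 2 * q).factorial) * ((2 * q + l + 1).choose (q + l + 1)) ≤
        C * (1 / (q + l + 1 : ℝ)) *
          (((q + n - l - 1 : ℕ) : ℝ) / (2 * q + l + 2)) ^ (n - l - 1)) ∧
    Tendsto
      (fun q : ℕ =>
        (((q + n - l - 1 : ℕ) ^ (n - l - 1) : ℝ) * q.factorial * (q + l).factorial /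
            (n + 2 * q).factorial) * ((2 * q + l + 1).choose (q + l + 1)))
      atTop (nhds 0) := by
  have key (q : ℕ) :
      ((q + n - l - 1 : ℕ) ^ (n - l - 1) : ℝ) * q ! * (q + l)! / (n + 2 * q)! *
          (2 * q + l + 1).choose (q + l + 1) ≤
        1 / (q + l + 1 : ℝ) * (((q + n - l - 1 : ℕ) : ℝ) / (2 * q + l + 2)) ^ (n - l - 1) := by
    have h := pow_mul_factorial_div_mul_choose_le q (q + l) (n - l - 1)
      (Nat.cast_nonneg (α := ℝ) (q + n - l - 1))
    rw [show q + (q + l) + 1 + (n - l - 1) = n + 2 * q by omega,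
      show q + (q + l) + 1 = 2 * q + l + 1 by omega] at h
    convert h using 4 <;> push_cast <;> ring
  refine ⟨⟨1, one_pos, fun q => ?_⟩, ?_⟩
  · simpa only [one_mul] using key q
  have hinv : Tendsto (fun q : ℕ => 1 / ((q : ℝ) + l + 1)) atTop (nhds 0) := by
    simpa only [one_div, Pi.inv_def] using (tendsto_atTop_add_const_right _ 1
      (tendsto_atTop_add_const_right _ (l : ℝ) tendsto_natCast_atTop_atTop)).inv_tendsto_atTop
  refine tendsto_of_tendsto_of_tendsto_of_le_of_le' tendsto_const_nhds hinv
    (Eventually.of_forall fun q => by positivity) ?_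
  filter_upwards [eventually_ge_atTop n] with q hq
  refine (key q).trans (mul_le_of_le_one_right (by positivity) (pow_le_one₀ (by positivity) ?_))
  rw [div_le_one (by positivity)]
  exact_mod_cast (show q + n - l - 1 ≤ 2 * q + l + 2 by omega)

/-- For fixed `1 ≤ l < n` and `N = n + 2q`, the quantity
`(q+n-l-1)^(n-l-1)·q!·(q+l)!/N! · C(2q+l+1, q+l+1)` is bounded by a constant (depending
only on `n, l`) times `(1/(q+l+1))·((q+n-l-1)/(2q+l+2))^(n-l-1)`, and tends to `0`. -/
theorem stmt_13 (n l : ℕ) (hl : 1 ≤ l) (hln : l < n) :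
    (∃ C : ℝ, 0 < C ∧ ∀ q : ℕ,
      (((q + n - l - 1 : ℕ) ^ (n - l - 1) : ℝ) * q.factorial * (q + l).factorial /
          (n + 2 * q).factorial) * ((2 * q + l + 1).choose (q + l + 1)) ≤
        C * (1 / (q + l + 1 : ℝ)) *
          (((q + n - l - 1 : ℕ) : ℝ) / (2 * q + l + 2)) ^ (n - l - 1)) ∧
    Tendsto
      (fun q : ℕ =>
        (((q + n - l - 1 : ℕ) ^ (n - l - 1) : ℝ) * q.factorial * (q + l).factorial /
            (n + 2 * q).factorial) * ((2 * q + l + 1).choose (q + l + 1)))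
      atTop (nhds 0) :=
  stmt_13_general n l hln
end

section
/- The canonical projection π_{n,J} commutes with shifts by elements of 𝔖_n: for all N > n, all h ∈ 𝔖_N, and all g₁, g₂ ∈ 𝔖_n, one has π_n(g₁⁻¹ h g₂) = g₁⁻¹ π_n(h) g₂, where π_n : 𝔖_N → 𝔖_n removes elements n+1, ..., N from the cycles. -/
/-!
If `g₁, g₂` fix every point outside `S = {0, …, n-1}`, then as long as the orbit of `g₂ a`
under `h` stays outside `S`, the orbit of `a` under `w = g₁⁻¹ h g₂` is its image under `g₁⁻¹`:
each intermediate point is fixed by both `g₂` and `g₁⁻¹`. Since `g₁⁻¹` preserves `S` and its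
complement, both orbits re-enter `S` at the same first time `m`, and there
`w^m a = g₁⁻¹ (h^m (g₂ a))`.
-/

open Equiv

/-- The induced permutation `π_n(w)` of `w ∈ 𝔖_N` on `{0, …, n-1}`, extended by the
identity on `{n, …, N-1}`: for `a < n`, `π_n(w)(a) = w^m(a)` for the least `m ≥ 1`
with `w^m(a) < n` (i.e. remove the elements `≥ n` from the cycles of `w`). -/
noncomputable def induced {N : ℕ} (n : ℕ) (w : Equiv.Perm (Fin N)) (a : Fin N) :
    Fin N :=
  if h : (a : ℕ) < n then
    (w ^ Nat.find (p := fun m => 0 < m ∧ (((w ^ m) a : Fin N) : ℕ) < n)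
      ⟨orderOf w, orderOf_pos w, by simp [pow_orderOf_eq_one]; exact h⟩) a
  else a

section FixedOutside

variable {α : Type*} {S : Set α}

theorem Equiv.Perm.apply_mem_of_forall_notMem {g : Perm α} (hg : ∀ x ∉ S, g x = x) {a : α}
    (ha : a ∈ S) : g a ∈ S := by
  by_contra hga
  exact hga (by rwa [g.injective (hg _ hga)])

theorem Equiv.Perm.inv_apply_of_forall_notMem {g : Perm α} (hg : ∀ x ∉ S, g x = x) :
    ∀ x ∉ S, g⁻¹ x = x :=
  fun x hx => Perm.inv_eq_iff_eq.2 (hg x hx).symm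

theorem Equiv.Perm.mul_mul_pow_apply_of_forall_notMem {g₁ h g₂ : Perm α}
    (hg₁ : ∀ x ∉ S, g₁ x = x) (hg₂ : ∀ x ∉ S, g₂ x = x) {a : α} {m : ℕ} (hm : 0 < m)
    (hout : ∀ k, 0 < k → k < m → (h ^ k) (g₂ a) ∉ S) :
    ((g₁⁻¹ * h * g₂) ^ m) a = g₁⁻¹ ((h ^ m) (g₂ a)) := by
  induction m, hm using Nat.le_induction with
  | base => simp [Perm.mul_apply]
  | succ m hm ih =>
    have hm_out := hout m hm m.lt_succ_self
    rw [pow_succ', Perm.mul_apply, ih fun k hk hkm => hout k hk (hkm.trans m.lt_succ_self),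
      Perm.inv_apply_of_forall_notMem hg₁ _ hm_out, Perm.mul_apply, Perm.mul_apply,
      hg₂ _ hm_out, pow_succ', Perm.mul_apply]

theorem Equiv.Perm.exists_first_return [Finite α] (w : Perm α) {a : α} (ha : a ∈ S) :
    ∃ m, 0 < m ∧ (w ^ m) a ∈ S ∧ ∀ k, 0 < k → k < m → (w ^ k) a ∉ S := by
  classical
  have hex : ∃ m, 0 < m ∧ (w ^ m) a ∈ S :=
    ⟨orderOf w, orderOf_pos w, by simpa [pow_orderOf_eq_one] using ha⟩
  exact ⟨Nat.find hex, (Nat.find_spec hex).1, (Nat.find_spec hex).2,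
    fun k hk hkm hkS => Nat.find_min hex hkm ⟨hk, hkS⟩⟩

end FixedOutside

section Induced

variable {N n : ℕ}

theorem induced_of_not_lt (w : Perm (Fin N)) {a : Fin N} (ha : ¬(a : ℕ) < n) :
    induced n w a = a := by
  rw [induced, dif_neg ha]

theorem induced_eq_pow_apply {w : Perm (Fin N)} {a : Fin N} (ha : (a : ℕ) < n) {m : ℕ}
    (hm : 0 < m) (hret : (((w ^ m) a : Fin N) : ℕ) < n)
    (hout : ∀ k, 0 < k → k < m → ¬(((w ^ k) a : Fin N) : ℕ) < n) :
    induced n w a = (w ^ m) a := by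
  rw [induced, dif_pos ha,
    (Nat.find_eq_iff _).2 ⟨⟨hm, hret⟩, fun k hkm hk => hout k hk.1 hkm hk.2⟩]

end Induced

theorem stmt_17_general (n N : ℕ) (h g₁ g₂ : Equiv.Perm (Fin N))
    (hg₁ : ∀ a : Fin N, n ≤ (a : ℕ) → g₁ a = a)
    (hg₂ : ∀ a : Fin N, n ≤ (a : ℕ) → g₂ a = a) :
    ∀ a : Fin N, induced n (g₁⁻¹ * h * g₂) a = g₁⁻¹ (induced n h (g₂ a)) := by
  set S : Set (Fin N) := {x | (x : ℕ) < n}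
  have hg₁S : ∀ x ∉ S, g₁ x = x := fun x hx => hg₁ x (not_lt.1 hx)
  have hg₂S : ∀ x ∉ S, g₂ x = x := fun x hx => hg₂ x (not_lt.1 hx)
  have hg₁S' := Perm.inv_apply_of_forall_notMem hg₁S
  intro a
  by_cases ha : a ∈ S
  · have hb : g₂ a ∈ S := Perm.apply_mem_of_forall_notMem hg₂S ha
    obtain ⟨m, hm, hret, hout⟩ := Perm.exists_first_return h hb
    have horbit : ∀ k, 0 < k → k ≤ m →
        ((g₁⁻¹ * h * g₂) ^ k) a = g₁⁻¹ ((h ^ k) (g₂ a)) :=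
      fun k hk hkm => Perm.mul_mul_pow_apply_of_forall_notMem hg₁S hg₂S hk
        fun j hj hjk => hout j hj (hjk.trans_le hkm)
    rw [induced_eq_pow_apply hb hm hret hout, ← horbit m hm le_rfl]
    refine induced_eq_pow_apply ha hm ?_ fun k hk hkm => ?_
    · rw [horbit m hm le_rfl]
      exact Perm.apply_mem_of_forall_notMem hg₁S' hret
    · rw [horbit k hk hkm.le, hg₁S' _ (hout k hk hkm)]
      exact hout k hk hkm
  · rw [induced_of_not_lt _ ha, hg₂S a ha, induced_of_not_lt _ ha, hg₁S' a ha]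

/-- The projection `π_n : 𝔖_N → 𝔖_n` commutes with two-sided shifts by elements of the
subgroup `𝔖_n` (permutations fixing `n, …, N-1`):
`π_n(g₁⁻¹ h g₂) = g₁⁻¹ π_n(h) g₂`. -/
theorem stmt_17 (n N : ℕ) (hnN : n < N) (h g₁ g₂ : Equiv.Perm (Fin N))
    (hg₁ : ∀ a : Fin N, n ≤ (a : ℕ) → g₁ a = a)
    (hg₂ : ∀ a : Fin N, n ≤ (a : ℕ) → g₂ a = a) :
    ∀ a : Fin N, induced n (g₁⁻¹ * h * g₂) a = g₁⁻¹ (induced n h (g₂ a)) :=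
  stmt_17_general n N h g₁ g₂ hg₁ hg₂
end
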